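/- arXiv:2106.02442 — 2 statements merged into one kernel-verified Lean document; each statement's English description precedes it below -/
import Mathlib

section
/- Let ρ : ℝ∖{0} → [0,∞) be a measurable even kernel with ∫_ℝ |t| ρ(t) dt = 1. Then for every real numbers a < b, E¹_ρ((a,b)) = 4 ∫_{−∞}^{a} ∫_{b}^{+∞} ρ(s−t) ds dt; in particular E¹_ρ((a,b)) decreases as the interval (a,b) grows. Moreover E¹_ρ(∅) = E¹_ρ(ℝ) = E¹_ρ((b,+∞)) = E¹_ρ((−∞,a)) = 0. -/
/-!
The essential boundary of `J ⊆ ℝ` lies in its topological boundary, and at an endpoint of an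
interval the density of `J` is `1/2`; so `P¹` counts endpoints: `2` for `(a, b)`, `1` for a
half-line, `0` for `∅` and `ℝ`.

Write `L(S, T) = ∫_S ∫_T ρ(s - t)`. Then `Per¹_ρ(J) = L(J, Jᶜ) + L(Jᶜ, J) = 2 L(J, Jᶜ)` since
`ρ` is even, and substituting `u = s - t` gives `L((c, ∞), (-∞, c]) = ∫₀^∞ u ρ(u) du = 1/2`,
which settles the half-lines. Splitting `(a, ∞) = (a, b) ∪ [b, ∞)` and
`(-∞, b) = (-∞, a] ∪ (a, b)` yields `L((a, b), (a, b)ᶜ) + 2 L([b, ∞), (-∞, a]) = 1`, so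
`E¹_ρ((a, b)) = 2 - 2 (1 - 2 L([b, ∞), (-∞, a])) = 4 L([b, ∞), (-∞, a])`, which decreases as the
interval grows.
-/

open MeasureTheory Metric Set Filter
open scoped ENNReal NNReal Topology

noncomputable section

/-- Indicator of a subset of `ℝ`. -/
def ind1 (J : Set ℝ) (s : ℝ) : ℝ := J.indicator (fun _ => (1 : ℝ)) s

/-- One-dimensional nonlocal perimeter with kernel `ρ`. -/
def nlPer1 (ρ : ℝ → ℝ) (J : Set ℝ) : ℝ :=
  ∫ s : ℝ, ∫ t : ℝ, |ind1 J s - ind1 J t| * ρ (s - t)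

/-- The essential boundary `∂*J` of a subset of `ℝ`: points where the density of `J`
tends neither to `0` nor to `1`. -/
def essBd1 (J : Set ℝ) : Set ℝ :=
  {x : ℝ | ¬ Tendsto (fun r : ℝ => volume (J ∩ ball x r) / volume (ball x r))
      (𝓝[>] (0 : ℝ)) (𝓝 0) ∧
    ¬ Tendsto (fun r : ℝ => volume (J ∩ ball x r) / volume (ball x r))
      (𝓝[>] (0 : ℝ)) (𝓝 1)}

/-- One-dimensional perimeter: `P¹(J) = H⁰(∂*J)`. -/
def per1 (J : Set ℝ) : ℝ := (μH[(0 : ℝ)] (essBd1 J)).toReal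

/-- One-dimensional critical energy `E¹_ρ = P¹ - Per¹_ρ`. -/
def critE1 (ρ : ℝ → ℝ) (J : Set ℝ) : ℝ := per1 J - nlPer1 ρ J

lemma eventually_nhdsGT_ball_subset {X : Type*} [PseudoMetricSpace X] {x : X} {s : Set X}
    (hs : s ∈ 𝓝 x) : ∀ᶠ r in 𝓝[>] (0 : ℝ), ball x r ⊆ s := by
  obtain ⟨ε, hε, hball⟩ := Metric.mem_nhds_iff.mp hs
  filter_upwards [Ioo_mem_nhdsGT hε] with r hr
  exact (ball_subset_ball hr.2.le).trans hball

lemma essBd1_subset_frontier (J : Set ℝ) : essBd1 J ⊆ frontier J := by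
  intro x ⟨hx₀, hx₁⟩
  by_contra hx
  by_cases hJ : x ∈ interior J
  · refine hx₁ (tendsto_const_nhds.congr' ?_)
    filter_upwards [eventually_nhdsGT_ball_subset (mem_interior_iff_mem_nhds.mp hJ),
      self_mem_nhdsWithin] with r hr (hr₀ : 0 < r)
    rw [inter_eq_right.mpr hr, ENNReal.div_self (measure_ball_pos _ _ hr₀).ne'
      measure_ball_lt_top.ne]
  · have hJc : x ∈ interior Jᶜ := by
      rw [interior_compl]
      exact fun hc => hx ⟨hc, hJ⟩
    refine hx₀ (tendsto_const_nhds.congr' ?_)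
    filter_upwards [eventually_nhdsGT_ball_subset (mem_interior_iff_mem_nhds.mp hJc)]
      with r hr
    rw [(disjoint_compl_right.mono_right hr).inter_eq, measure_empty, ENNReal.zero_div]

lemma mem_essBd1_of_volume_inter_ball {J : Set ℝ} {x : ℝ}
    (h : ∀ᶠ r in 𝓝[>] (0 : ℝ), volume (J ∩ ball x r) = ENNReal.ofReal r) : x ∈ essBd1 J := by
  have half : Tendsto (fun r : ℝ => volume (J ∩ ball x r) / volume (ball x r))
      (𝓝[>] (0 : ℝ)) (𝓝 2⁻¹) := by
    refine tendsto_const_nhds.congr' (EventuallyEq.symm ?_)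
    filter_upwards [h, self_mem_nhdsWithin] with r hr (hr₀ : 0 < r)
    rw [hr, Real.volume_ball, ENNReal.ofReal_mul zero_le_two, ENNReal.ofReal_ofNat]
    simpa using ENNReal.mul_div_mul_right 1 2 (by simpa using hr₀) ENNReal.ofReal_ne_top
  exact ⟨fun h₀ => by simpa using tendsto_nhds_unique half h₀,
    fun h₁ => by simpa using tendsto_nhds_unique half h₁⟩

lemma essBd1_Ioo {a b : ℝ} (hab : a < b) : essBd1 (Ioo a b) = {a, b} := by
  refine (essBd1_subset_frontier _).trans_eq (frontier_Ioo hab) |>.antisymm ?_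
  rintro x (rfl | rfl) <;> apply mem_essBd1_of_volume_inter_ball <;>
    filter_upwards [Ioo_mem_nhdsGT (sub_pos.mpr hab)] with r hr
  · rw [Real.ball_eq_Ioo, Ioo_inter_Ioo, max_eq_left (by linarith [hr.1]),
      min_eq_right (by linarith [hr.2]), Real.volume_Ioo, add_sub_cancel_left]
  · rw [Real.ball_eq_Ioo, Ioo_inter_Ioo, max_eq_right (by linarith [hr.2]),
      min_eq_left (by linarith [hr.1]), Real.volume_Ioo, sub_sub_cancel]

lemma essBd1_Ioi (b : ℝ) : essBd1 (Ioi b) = {b} := by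
  refine (essBd1_subset_frontier _).trans_eq frontier_Ioi |>.antisymm ?_
  rintro x rfl
  apply mem_essBd1_of_volume_inter_ball
  filter_upwards [self_mem_nhdsWithin] with r (hr : 0 < r)
  rw [Real.ball_eq_Ioo, Ioi_inter_Ioo, max_eq_left (by linarith), Real.volume_Ioo,
    add_sub_cancel_left]

lemma essBd1_Iio (a : ℝ) : essBd1 (Iio a) = {a} := by
  refine (essBd1_subset_frontier _).trans_eq frontier_Iio |>.antisymm ?_
  rintro x rfl
  apply mem_essBd1_of_volume_inter_ball
  filter_upwards [self_mem_nhdsWithin] with r (hr : 0 < r)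
  rw [Real.ball_eq_Ioo, Iio_inter_Ioo, min_eq_left (by linarith), Real.volume_Ioo,
    sub_sub_cancel]

lemma essBd1_empty : essBd1 (∅ : Set ℝ) = ∅ :=
  subset_empty_iff.mp ((essBd1_subset_frontier _).trans_eq frontier_empty)

lemma essBd1_univ : essBd1 (univ : Set ℝ) = ∅ :=
  subset_empty_iff.mp ((essBd1_subset_frontier _).trans_eq frontier_univ)

lemma per1_Ioo {a b : ℝ} (hab : a < b) : per1 (Ioo a b) = 2 := by
  rw [per1, essBd1_Ioo hab, insert_eq, measure_union (disjoint_singleton.mpr hab.ne)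
    (measurableSet_singleton b), Measure.hausdorffMeasure_zero_singleton,
    Measure.hausdorffMeasure_zero_singleton]
  norm_num

lemma per1_Ioi (b : ℝ) : per1 (Ioi b) = 1 := by
  rw [per1, essBd1_Ioi, Measure.hausdorffMeasure_zero_singleton, ENNReal.toReal_one]

lemma per1_Iio (a : ℝ) : per1 (Iio a) = 1 := by
  rw [per1, essBd1_Iio, Measure.hausdorffMeasure_zero_singleton, ENNReal.toReal_one]

lemma integral_integral_eq_toReal_lintegral_lintegral {α β : Type*} [MeasurableSpace α]
    [MeasurableSpace β] {μ : Measure α} {ν : Measure β} [SFinite ν] {F : α → β → ℝ}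
    (hF : Measurable (Function.uncurry F)) (hF₀ : ∀ x, 0 ≤ᵐ[ν] F x)
    (hfin : ∫⁻ x, ∫⁻ y, ENNReal.ofReal (F x y) ∂ν ∂μ ≠ ∞) :
    ∫ x, ∫ y, F x y ∂ν ∂μ = (∫⁻ x, ∫⁻ y, ENNReal.ofReal (F x y) ∂ν ∂μ).toReal := by
  have hG : Measurable fun x => ∫⁻ y, ENNReal.ofReal (F x y) ∂ν :=
    hF.ennreal_ofReal.lintegral_prod_right'
  rw [← integral_toReal hG.aemeasurable (ae_lt_top hG hfin)]
  exact integral_congr_ae (ae_of_all _ fun x => integral_eq_lintegral_of_nonneg_ae (hF₀ x)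
    (hF.comp measurable_prodMk_left).aestronglyMeasurable)

def kernelInteraction (ρ : ℝ → ℝ) (S T : Set ℝ) : ℝ≥0∞ :=
  ∫⁻ s in S, ∫⁻ t in T, ENNReal.ofReal (ρ (s - t))

/-- `∫₀^∞ u ρ(u) du`: the factor `ofReal u` vanishes for `u ≤ 0`. -/
def firstMomentPos (ρ : ℝ → ℝ) : ℝ≥0∞ :=
  ∫⁻ u, ENNReal.ofReal (ρ u) * ENNReal.ofReal u

section KernelInteraction

variable {ρ : ℝ → ℝ}

lemma kernelInteraction_congr_ae {S S' T T' : Set ℝ} (hS : S =ᵐ[volume] S')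
    (hT : T =ᵐ[volume] T') : kernelInteraction ρ S T = kernelInteraction ρ S' T' :=
  (setLIntegral_congr hS).trans (lintegral_congr fun _ => setLIntegral_congr hT)

lemma kernelInteraction_mono {S S' T T' : Set ℝ} (hS : S ⊆ S') (hT : T ⊆ T') :
    kernelInteraction ρ S T ≤ kernelInteraction ρ S' T' :=
  (lintegral_mono fun _ => lintegral_mono_set hT).trans (lintegral_mono_set hS)

lemma kernelInteraction_union_left {S₁ S₂ : Set ℝ} (T : Set ℝ) (hS₂ : MeasurableSet S₂)
    (hd : Disjoint S₁ S₂) :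
    kernelInteraction ρ (S₁ ∪ S₂) T = kernelInteraction ρ S₁ T + kernelInteraction ρ S₂ T :=
  lintegral_union hS₂ hd

lemma kernelInteraction_comm (hρ : Measurable ρ) (heven : ∀ t, ρ (-t) = ρ t) (S T : Set ℝ) :
    kernelInteraction ρ S T = kernelInteraction ρ T S := by
  rw [kernelInteraction, lintegral_lintegral_swap
    (hρ.comp (measurable_fst.sub measurable_snd)).ennreal_ofReal.aemeasurable]
  exact lintegral_congr fun _ => lintegral_congr fun _ => by rw [← neg_sub, heven]

/-- Substitute `u = s - t` in the inner integral, then swap the integrals (Tonelli). -/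
lemma kernelInteraction_eq_lintegral_mul_volume (hρ : Measurable ρ) (S : Set ℝ) {T : Set ℝ}
    (hT : MeasurableSet T) :
    kernelInteraction ρ S T =
      ∫⁻ u, ENNReal.ofReal (ρ u) * volume ((· - u) ⁻¹' T ∩ S) := by
  calc kernelInteraction ρ S T
      = ∫⁻ s in S, ∫⁻ u, T.indicator 1 (s - u) * ENNReal.ofReal (ρ u) := by
        refine lintegral_congr fun s => ?_
        rw [← lintegral_indicator hT, ← lintegral_sub_left_eq_self _ s]
        refine lintegral_congr fun u => ?_
        by_cases hu : s - u ∈ T <;> simp [hu]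
    _ = ∫⁻ u, ∫⁻ s in S, T.indicator 1 (s - u) * ENNReal.ofReal (ρ u) :=
        lintegral_lintegral_swap (Measurable.aemeasurable
          (((measurable_const.indicator hT).comp (measurable_fst.sub measurable_snd)).mul
            (hρ.comp measurable_snd).ennreal_ofReal))
    _ = ∫⁻ u, ENNReal.ofReal (ρ u) * volume ((· - u) ⁻¹' T ∩ S) := by
        refine lintegral_congr fun u => ?_
        have hpre : MeasurableSet ((· - u) ⁻¹' T) := measurable_id.sub_const u hT
        change ∫⁻ s in S, ((· - u) ⁻¹' T).indicator 1 s * _ = _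
        rw [lintegral_mul_const' _ _ ENNReal.ofReal_ne_top, lintegral_indicator_one hpre,
          Measure.restrict_apply hpre, mul_comm]

lemma kernelInteraction_Ioi_Iic (hρ : Measurable ρ) (c : ℝ) :
    kernelInteraction ρ (Ioi c) (Iic c) = firstMomentPos ρ := by
  rw [kernelInteraction_eq_lintegral_mul_volume hρ _ measurableSet_Iic]
  refine lintegral_congr fun u => ?_
  rw [preimage_sub_const_Iic, Iic_inter_Ioi, Real.volume_Ioc, add_sub_cancel_left]

lemma kernelInteraction_Iio_Ici (hρ : Measurable ρ) (heven : ∀ t, ρ (-t) = ρ t) (c : ℝ) :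
    kernelInteraction ρ (Iio c) (Ici c) = firstMomentPos ρ := by
  rw [kernelInteraction_congr_ae Iio_ae_eq_Iic Ioi_ae_eq_Ici.symm,
    kernelInteraction_comm hρ heven, kernelInteraction_Ioi_Iic hρ]

lemma kernelInteraction_Ioo_compl_add (hρ : Measurable ρ) (heven : ∀ t, ρ (-t) = ρ t)
    {a b : ℝ} (hab : a < b) :
    kernelInteraction ρ (Ioo a b) (Ioo a b)ᶜ + 2 * kernelInteraction ρ (Ici b) (Iic a) =
      2 * firstMomentPos ρ := by
  have hcomm := kernelInteraction_comm hρ heven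
  have hleft : kernelInteraction ρ (Ioo a b) (Iic a) + kernelInteraction ρ (Ici b) (Iic a) =
      firstMomentPos ρ := by
    rw [← kernelInteraction_union_left _ measurableSet_Ici
      (disjoint_left.mpr fun x hx hx' => (mem_Ici.mp hx').not_gt hx.2),
      Ioo_union_Ici_eq_Ioi hab, kernelInteraction_Ioi_Iic hρ]
  have hright : kernelInteraction ρ (Ioo a b) (Ici b) + kernelInteraction ρ (Ici b) (Iic a) =
      firstMomentPos ρ := by
    rw [hcomm (Ici b), add_comm, ← kernelInteraction_union_left _ measurableSet_Ioo
      (disjoint_left.mpr fun x hx hx' => (mem_Iic.mp hx).not_gt hx'.1),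
      Iic_union_Ioo_eq_Iio hab, kernelInteraction_Iio_Ici hρ heven]
  have hcompl : (Ioo a b)ᶜ = Iic a ∪ Ici b := by
    ext x
    simp [imp_iff_not_or]
  calc kernelInteraction ρ (Ioo a b) (Ioo a b)ᶜ + 2 * kernelInteraction ρ (Ici b) (Iic a)
      = (kernelInteraction ρ (Ioo a b) (Iic a) + kernelInteraction ρ (Ici b) (Iic a)) +
          (kernelInteraction ρ (Ioo a b) (Ici b) + kernelInteraction ρ (Ici b) (Iic a)) := by
        rw [hcomm, hcompl, kernelInteraction_union_left _ measurableSet_Ici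
          (Iic_disjoint_Ici.mpr hab.not_ge), hcomm (Iic a), hcomm (Ici b)]
        ring
    _ = 2 * firstMomentPos ρ := by rw [hleft, hright, two_mul]

lemma kernelInteraction_Ici_Iic_le_firstMomentPos (hρ : Measurable ρ) {a b : ℝ} (hab : a < b) :
    kernelInteraction ρ (Ici b) (Iic a) ≤ firstMomentPos ρ := by
  rw [← kernelInteraction_Ioi_Iic hρ a]
  exact kernelInteraction_mono (Ici_subset_Ioi.mpr hab) subset_rfl

lemma lintegral_nlPer1_integrand {J : Set ℝ} (hJ : MeasurableSet J) :
    ∫⁻ s, ∫⁻ t, ENNReal.ofReal (|ind1 J s - ind1 J t| * ρ (s - t)) =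
      kernelInteraction ρ J Jᶜ + kernelInteraction ρ Jᶜ J := by
  rw [← lintegral_add_compl _ hJ]
  congr 1
  · refine setLIntegral_congr_fun hJ fun s hs => ?_
    rw [← lintegral_indicator hJ.compl]
    refine lintegral_congr fun t => ?_
    by_cases ht : t ∈ J <;> simp [ind1, hs, ht]
  · refine setLIntegral_congr_fun hJ.compl fun s (hs : s ∉ J) => ?_
    rw [← lintegral_indicator hJ]
    refine lintegral_congr fun t => ?_
    by_cases ht : t ∈ J <;> simp [ind1, hs, ht]

lemma nlPer1_eq_two_mul_toReal_kernelInteraction (hρ : Measurable ρ)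
    (hnn : ∀ t, t ≠ 0 → 0 ≤ ρ t) (heven : ∀ t, ρ (-t) = ρ t) {J : Set ℝ}
    (hJ : MeasurableSet J) (hfin : kernelInteraction ρ J Jᶜ ≠ ∞) :
    nlPer1 ρ J = 2 * (kernelInteraction ρ J Jᶜ).toReal := by
  have hsplit := lintegral_nlPer1_integrand (ρ := ρ) hJ
  rw [kernelInteraction_comm hρ heven Jᶜ, ← two_mul] at hsplit
  have hind : Measurable (ind1 J) := measurable_const.indicator hJ
  have hF₀ : ∀ s, ∀ t, 0 ≤ |ind1 J s - ind1 J t| * ρ (s - t) := fun s t => by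
    by_cases hst : s = t
    · simp [hst]
    · exact mul_nonneg (abs_nonneg _) (hnn _ (sub_ne_zero.mpr hst))
  rw [nlPer1, integral_integral_eq_toReal_lintegral_lintegral (by fun_prop)
    (fun s => ae_of_all _ (hF₀ s)) (by rw [hsplit]; finiteness), hsplit,
    ENNReal.toReal_mul, ENNReal.toReal_ofNat]

end KernelInteraction

lemma firstMomentPos_eq_half {ρ : ℝ → ℝ} (hρ : Measurable ρ) (hnn : ∀ t, t ≠ 0 → 0 ≤ ρ t)
    (heven : ∀ t, ρ (-t) = ρ t) (hnorm : ∫ t, |t| * ρ t = 1)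
    (hint : Integrable fun t => |t| * ρ t) :
    firstMomentPos ρ = 2⁻¹ := by
  have hmeas : Measurable fun u => ENNReal.ofReal (ρ u) * ENNReal.ofReal u := by fun_prop
  have hrefl : ∫⁻ u, ENNReal.ofReal (ρ u) * ENNReal.ofReal (-u) = firstMomentPos ρ := by
    rw [← lintegral_neg_eq_self]
    simp only [heven, neg_neg, firstMomentPos]
  have hsplit : ∀ u, ENNReal.ofReal (|u| * ρ u) =
      ENNReal.ofReal (ρ u) * ENNReal.ofReal u + ENNReal.ofReal (ρ u) * ENNReal.ofReal (-u) := by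
    intro u
    rcases le_total 0 u with hu | hu
    · rw [abs_of_nonneg hu, ENNReal.ofReal_mul hu, ENNReal.ofReal_of_nonpos (neg_nonpos.mpr hu),
        mul_zero, add_zero, mul_comm]
    · rw [abs_of_nonpos hu, ENNReal.ofReal_mul (by linarith), ENNReal.ofReal_of_nonpos hu,
        mul_zero, zero_add, mul_comm]
  have hnn' : 0 ≤ᵐ[volume] fun t => |t| * ρ t := by
    filter_upwards [Measure.ae_ne volume 0] with t ht
    exact mul_nonneg (abs_nonneg t) (hnn t ht)
  have htwo : firstMomentPos ρ * 2 = 1 := by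
    calc firstMomentPos ρ * 2 = ∫⁻ u, ENNReal.ofReal (|u| * ρ u) := by
          simp_rw [hsplit]
          rw [lintegral_add_left hmeas, hrefl, mul_two, firstMomentPos]
      _ = 1 := by rw [← ofReal_integral_eq_lintegral_ofReal hint hnn', hnorm, ENNReal.ofReal_one]
  exact ENNReal.eq_inv_of_mul_eq_one_left htwo

lemma critE1_empty (ρ : ℝ → ℝ) : critE1 ρ ∅ = 0 := by
  simp [critE1, per1, essBd1_empty, nlPer1, ind1]

lemma critE1_univ (ρ : ℝ → ℝ) : critE1 ρ univ = 0 := by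
  simp [critE1, per1, essBd1_univ, nlPer1, ind1]

section CriticalEnergy

variable {ρ : ℝ → ℝ}

lemma critE1_Ioi (hρ : Measurable ρ) (hnn : ∀ t, t ≠ 0 → 0 ≤ ρ t)
    (heven : ∀ t, ρ (-t) = ρ t) (hM : firstMomentPos ρ = 2⁻¹) (b : ℝ) :
    critE1 ρ (Ioi b) = 0 := by
  have hL : kernelInteraction ρ (Ioi b) (Ioi b)ᶜ = 2⁻¹ := by
    rw [compl_Ioi, kernelInteraction_Ioi_Iic hρ, hM]
  rw [critE1, per1_Ioi, nlPer1_eq_two_mul_toReal_kernelInteraction hρ hnn heven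
    measurableSet_Ioi (by rw [hL]; finiteness), hL]
  norm_num

lemma critE1_Iio (hρ : Measurable ρ) (hnn : ∀ t, t ≠ 0 → 0 ≤ ρ t)
    (heven : ∀ t, ρ (-t) = ρ t) (hM : firstMomentPos ρ = 2⁻¹) (a : ℝ) :
    critE1 ρ (Iio a) = 0 := by
  have hL : kernelInteraction ρ (Iio a) (Iio a)ᶜ = 2⁻¹ := by
    rw [compl_Iio, kernelInteraction_Iio_Ici hρ heven, hM]
  rw [critE1, per1_Iio, nlPer1_eq_two_mul_toReal_kernelInteraction hρ hnn heven
    measurableSet_Iio (by rw [hL]; finiteness), hL]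
  norm_num

lemma critE1_Ioo (hρ : Measurable ρ) (hnn : ∀ t, t ≠ 0 → 0 ≤ ρ t)
    (heven : ∀ t, ρ (-t) = ρ t) (hM : firstMomentPos ρ = 2⁻¹) {a b : ℝ} (hab : a < b) :
    critE1 ρ (Ioo a b) = 4 * (kernelInteraction ρ (Ici b) (Iic a)).toReal := by
  have key := kernelInteraction_Ioo_compl_add hρ heven hab
  rw [hM, ENNReal.mul_inv_cancel two_ne_zero ENNReal.ofNat_ne_top] at key
  have hfin : kernelInteraction ρ (Ioo a b) (Ioo a b)ᶜ ≠ ∞ :=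
    ne_top_of_le_ne_top ENNReal.one_ne_top (key ▸ le_self_add)
  have hfin' : 2 * kernelInteraction ρ (Ici b) (Iic a) ≠ ∞ :=
    ne_top_of_le_ne_top ENNReal.one_ne_top (key ▸ le_add_self)
  have key' := congrArg ENNReal.toReal key
  rw [ENNReal.toReal_add hfin hfin', ENNReal.toReal_mul, ENNReal.toReal_ofNat,
    ENNReal.toReal_one] at key'
  rw [critE1, per1_Ioo hab, nlPer1_eq_two_mul_toReal_kernelInteraction hρ hnn heven
    measurableSet_Ioo hfin]
  linarith

lemma setIntegral_Iio_setIntegral_Ioi_eq_toReal (hρ : Measurable ρ)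
    (hnn : ∀ t, t ≠ 0 → 0 ≤ ρ t) (heven : ∀ t, ρ (-t) = ρ t) {a b : ℝ}
    (hfin : kernelInteraction ρ (Ici b) (Iic a) ≠ ∞) :
    ∫ t in Iio a, ∫ s in Ioi b, ρ (s - t) = (kernelInteraction ρ (Ici b) (Iic a)).toReal := by
  have hL : ∫⁻ t in Iio a, ∫⁻ s in Ioi b, ENNReal.ofReal (ρ (s - t)) =
      kernelInteraction ρ (Ici b) (Iic a) := by
    rw [kernelInteraction_comm hρ heven, ← kernelInteraction_congr_ae Iio_ae_eq_Iic Ioi_ae_eq_Ici]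
    exact lintegral_congr fun t => lintegral_congr fun s => by rw [← neg_sub, heven]
  rw [integral_integral_eq_toReal_lintegral_lintegral (F := fun t s => ρ (s - t))
    (hρ.comp (measurable_snd.sub measurable_fst))
    (fun t => ae_restrict_of_ae ((Measure.ae_ne volume t).mono fun s hs =>
      hnn _ (sub_ne_zero.mpr hs))) (hL ▸ hfin), hL]

end CriticalEnergy

/-- For a measurable even nonnegative kernel `ρ` on `ℝ ∖ {0}` with
`∫ |t| ρ(t) dt = 1`: the critical energy of a bounded open interval `(a,b)` equals
`4 ∫_{-∞}^a ∫_b^∞ ρ(s-t) ds dt`, it decreases as the interval grows, and the critical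
energy of `∅`, `ℝ` and half-lines vanishes. -/
theorem critE1_interval (ρ : ℝ → ℝ)
    (hmeas : Measurable ρ) (hnn : ∀ t : ℝ, t ≠ 0 → 0 ≤ ρ t)
    (heven : ∀ t : ℝ, ρ (-t) = ρ t)
    (hnorm : (∫ t : ℝ, |t| * ρ t) = 1)
    (hint : Integrable (fun t : ℝ => |t| * ρ t)) :
    (∀ a b : ℝ, a < b →
      critE1 ρ (Set.Ioo a b) = 4 * ∫ t in Set.Iio a, (∫ s in Set.Ioi b, ρ (s - t))) ∧
    (∀ a b a' b' : ℝ, a < b → a' ≤ a → b ≤ b' →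
      critE1 ρ (Set.Ioo a' b') ≤ critE1 ρ (Set.Ioo a b)) ∧
    critE1 ρ (∅ : Set ℝ) = 0 ∧
    critE1 ρ (Set.univ : Set ℝ) = 0 ∧
    (∀ b : ℝ, critE1 ρ (Set.Ioi b) = 0) ∧
    (∀ a : ℝ, critE1 ρ (Set.Iio a) = 0) := by
  have hM := firstMomentPos_eq_half hmeas hnn heven hnorm hint
  have hfin : ∀ a b : ℝ, a < b → kernelInteraction ρ (Ici b) (Iic a) ≠ ∞ := fun a b hab =>
    ne_top_of_le_ne_top (by rw [hM]; finiteness)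
      (kernelInteraction_Ici_Iic_le_firstMomentPos hmeas hab)
  refine ⟨fun a b hab => ?_, fun a b a' b' hab ha hb => ?_, critE1_empty ρ, critE1_univ ρ,
    critE1_Ioi hmeas hnn heven hM, critE1_Iio hmeas hnn heven hM⟩
  · rw [critE1_Ioo hmeas hnn heven hM hab,
      setIntegral_Iio_setIntegral_Ioi_eq_toReal hmeas hnn heven (hfin a b hab)]
  · rw [critE1_Ioo hmeas hnn heven hM hab,
      critE1_Ioo hmeas hnn heven hM ((ha.trans_lt hab).trans_le hb)]
    gcongr 4 * ?_
    exact ENNReal.toReal_mono (hfin a b hab)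
      (kernelInteraction_mono (Ici_subset_Ici.mpr hb) (Iic_subset_Iic.mpr ha))
end
end

section
/- Let n = 2, G satisfy (H1)–(H2), γ ∈ (0,1), and let δ : (0,∞) → (0,1/4) be the function vanishing at 0⁺ from the existence theorem. For any α ∈ (0,1), there exist positive constants r = r(α) and ε̄₂ = ε̄₂(G,γ,α) such that: if E ⊆ ℝ² is a convex set with B_{1−δ(ε)} ⊆ E ⊆ B_{1+δ(ε)} for some 0 < ε < ε̄₂, then for H¹-a.e. x ∈ ∂E, the truncated cone {y ∈ B_r(x) : ((x−y)/|x−y|)·ν_E(x) ≥ α} is contained in E, where ν_E(x) is the outer unit normal to E at x. -/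
open MeasureTheory Metric Set Filter
open scoped ENNReal NNReal Topology Pointwise

noncomputable section

/-- Indicator function (with value `1`) of a set. -/
def ind {n : ℕ} (E : Set (EuclideanSpace ℝ (Fin n))) (x : EuclideanSpace ℝ (Fin n)) : ℝ :=
  E.indicator (fun _ => (1 : ℝ)) x

/-- Nonlocal perimeter `Per_G(E) = ∬ |1_E(x) - 1_E(y)| G(x-y) dx dy`. -/
def nlPer {n : ℕ} (G : EuclideanSpace ℝ (Fin n) → ℝ) (E : Set (EuclideanSpace ℝ (Fin n))) : ℝ :=
  ∫ x, ∫ y, |ind E x - ind E y| * G (x - y)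

/-- Rescaled kernel `G_ε(x) = ε^{-(n+1)} G(x/ε)`. -/
def resc {n : ℕ} (G : EuclideanSpace ℝ (Fin n) → ℝ) (ε : ℝ)
    (x : EuclideanSpace ℝ (Fin n)) : ℝ :=
  ε ^ (-((n : ℤ) + 1)) * G (ε⁻¹ • x)

/-- Divergence of a vector field on `ℝⁿ`. -/
def divg {n : ℕ} (φ : EuclideanSpace ℝ (Fin n) → EuclideanSpace ℝ (Fin n))
    (x : EuclideanSpace ℝ (Fin n)) : ℝ :=
  ∑ i, fderiv ℝ φ x (EuclideanSpace.single i 1) i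

/-- Distributional perimeter (as an extended nonnegative real), defined by duality with
compactly supported `C¹` vector fields bounded by `1`. -/
def per {n : ℕ} (E : Set (EuclideanSpace ℝ (Fin n))) : ℝ≥0∞ :=
  ⨆ (φ : EuclideanSpace ℝ (Fin n) → EuclideanSpace ℝ (Fin n)) (_ : ContDiff ℝ 1 φ)
    (_ : HasCompactSupport φ) (_ : ∀ x, ‖φ x‖ ≤ 1),
      ENNReal.ofReal (∫ x in E, divg φ x)

/-- `E` is a set of finite perimeter. -/
def HasFinPer {n : ℕ} (E : Set (EuclideanSpace ℝ (Fin n))) : Prop :=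
  MeasurableSet E ∧ per E < ⊤

/-- The perimeter `P(E)` as a real number. -/
def peri {n : ℕ} (E : Set (EuclideanSpace ℝ (Fin n))) : ℝ := (per E).toReal

/-- The constant `K_{1,n} = ⨍_{S^{n-1}} |σ·ν| dH^{n-1}(σ)`. -/
def Kconst {n : ℕ} (ν : EuclideanSpace ℝ (Fin n)) : ℝ :=
  ⨍ σ in sphere (0 : EuclideanSpace ℝ (Fin n)) 1, |(inner ℝ σ ν : ℝ)| ∂ μH[(n : ℝ) - 1]

/-- Hypothesis (H1): `G` is nonnegative, measurable and radial, `G(x) = g(|x|)`. -/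
def HypH1 {n : ℕ} (G : EuclideanSpace ℝ (Fin n) → ℝ) (g : ℝ → ℝ) : Prop :=
  Measurable g ∧ (∀ r : ℝ, 0 < r → 0 ≤ g r) ∧ (∀ x, G x = g ‖x‖)

/-- Hypothesis (H2): the first moment of `G` is finite and equals `1/K_{1,n}`. -/
def HypH2 {n : ℕ} (G : EuclideanSpace ℝ (Fin n) → ℝ) : Prop :=
  Integrable (fun x : EuclideanSpace ℝ (Fin n) => ‖x‖ * G x) ∧
    ∀ ν : EuclideanSpace ℝ (Fin n), ‖ν‖ = 1 →
      (∫ x : EuclideanSpace ℝ (Fin n), ‖x‖ * G x) = (Kconst ν)⁻¹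

/-- Hypothesis (H3): `G ∈ W^{1,1}_loc(ℝⁿ \ {0})`, finite second moment of the radial
derivative, and `g'(r) = O(r^{-(n+1)})` at infinity. -/
def HypH3 (n : ℕ) (g : ℝ → ℝ) : Prop :=
  (∀ r : ℝ, 0 < r → DifferentiableAt ℝ g r) ∧
  Integrable (fun x : EuclideanSpace ℝ (Fin n) => ‖x‖ ^ 2 * |deriv g ‖x‖|) ∧
  ∃ C R : ℝ, 0 < C ∧ 0 < R ∧ ∀ r : ℝ, R ≤ r → |deriv g r| ≤ C * r ^ (-((n : ℤ) + 1))

/-- The functional `F_{γ,G_ε}(E) = P(E) - γ Per_{G_ε}(E)`. -/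
def Fen {n : ℕ} (γ : ℝ) (G : EuclideanSpace ℝ (Fin n) → ℝ) (ε : ℝ)
    (E : Set (EuclideanSpace ℝ (Fin n))) : ℝ :=
  peri E - γ * nlPer (resc G ε) E

/-- `E` is a minimizer of `F_{γ,G_ε}` under the volume constraint `|E| = |B₁|`. -/
def IsMinim {n : ℕ} (γ : ℝ) (G : EuclideanSpace ℝ (Fin n) → ℝ) (ε : ℝ)
    (E : Set (EuclideanSpace ℝ (Fin n))) : Prop :=
  HasFinPer E ∧ volume E = volume (ball (0 : EuclideanSpace ℝ (Fin n)) 1) ∧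
    ∀ F : Set (EuclideanSpace ℝ (Fin n)), HasFinPer F →
      volume F = volume (ball (0 : EuclideanSpace ℝ (Fin n)) 1) →
        Fen γ G ε E ≤ Fen γ G ε F

/-- `x` is a point of the reduced boundary of `E` with measure-theoretic outer unit normal
`ν`: the blow-ups of `E` at `x` converge, locally in measure, to the half-space
`{y : y·ν ≤ 0}`. -/
def HasOutNormalAt {n : ℕ} (E : Set (EuclideanSpace ℝ (Fin n)))
    (x ν : EuclideanSpace ℝ (Fin n)) : Prop :=
  ‖ν‖ = 1 ∧ ∀ R : ℝ, 0 < R →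
    Tendsto (fun r : ℝ =>
        volume (symmDiff {y ∈ ball (0 : EuclideanSpace ℝ (Fin n)) R | x + r • y ∈ E}
          {y ∈ ball (0 : EuclideanSpace ℝ (Fin n)) R | (inner ℝ y ν : ℝ) ≤ 0}))
      (𝓝[>] (0 : ℝ)) (𝓝 0)

/-- The reduced boundary `∂*E`. -/
def redBdry {n : ℕ} (E : Set (EuclideanSpace ℝ (Fin n))) : Set (EuclideanSpace ℝ (Fin n)) :=
  {x | ∃ ν, HasOutNormalAt E x ν}

open Classical in
/-- The measure-theoretic outer unit normal `ν_E(x)` (zero where undefined). -/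
def outNormal {n : ℕ} (E : Set (EuclideanSpace ℝ (Fin n))) (x : EuclideanSpace ℝ (Fin n)) :
    EuclideanSpace ℝ (Fin n) :=
  if h : ∃ ν, HasOutNormalAt E x ν then h.choose else 0

/-- `P̃_G(E) = 2 ∫_E ∫_{∂*E} G(x-y) (y-x)·ν_E(y) dH^{n-1}(y) dx`. -/
def Ptil {n : ℕ} (G : EuclideanSpace ℝ (Fin n) → ℝ) (E : Set (EuclideanSpace ℝ (Fin n))) : ℝ :=
  2 * ∫ x in E, (∫ y in redBdry E,
        G (x - y) * (inner ℝ (y - x) (outNormal E y) : ℝ) ∂ μH[(n : ℝ) - 1])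

/-!
At a boundary point `x` of a convex body with measure-theoretic outer normal `ν`, the normal
is a supporting one: an interior point `w` with `(w - x)·ν > 0` would give an open set of positive
measure on the wrong side of the tangent half-space inside every blow-up of `E` at `x`.
If `B_{1-η} ⊆ E ⊆ B_{1+η}`, testing the support inequality on `(1-η)ν` gives `x·ν ≥ 1-η`, so the
component of `x` orthogonal to `ν` is at most `2√η`. For a unit `u` with `u·ν ≥ α` and
`η ≤ α²/64` this puts `x - (α/2)u` inside `B_{1-η}`, and the cone truncated at radius `α/2` is
covered by the open segments joining `x` to these interior points. Thus `r = α/2` and `ε̄₂` is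
any bound below which `δ < α²/64`.
-/

open RealInnerProductSpace

section InnerProductSpace

variable {V : Type*} [NormedAddCommGroup V] [InnerProductSpace ℝ V]

lemma norm_sub_inner_smul_sq (x : V) {ν : V} (hν : ‖ν‖ = 1) :
    ‖x - ⟪x, ν⟫ • ν‖ ^ 2 = ‖x‖ ^ 2 - ⟪x, ν⟫ ^ 2 := by
  rw [norm_sub_sq_real, real_inner_smul_right, norm_smul, Real.norm_eq_abs, hν, mul_one, sq_abs]
  ring

variable {x ν u : V} {α η : ℝ}

lemma le_one_of_le_inner (hν : ‖ν‖ = 1) (hu : ‖u‖ = 1) (huν : α ≤ ⟪u, ν⟫) : α ≤ 1 := by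
  have := real_inner_le_norm u ν
  rw [hu, hν, one_mul] at this
  linarith

lemma half_le_inner_of_near_sphere (hν : ‖ν‖ = 1) (hu : ‖u‖ = 1) (hα : 0 < α)
    (hη : η ≤ α ^ 2 / 64) (hxn : ‖x‖ ≤ 1 + η) (hxν : 1 - η ≤ ⟪x, ν⟫) (huν : α ≤ ⟪u, ν⟫) :
    α / 2 ≤ ⟪x, u⟫ := by
  have hα1 := le_one_of_le_inner hν hu huν
  set a := ⟪x, ν⟫
  have htan : ‖x - a • ν‖ ≤ α / 4 := by
    have hsq : ‖x - a • ν‖ ^ 2 ≤ (α / 4) ^ 2 := by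
      rw [norm_sub_inner_smul_sq x hν]
      nlinarith [pow_le_pow_left₀ (norm_nonneg x) hxn 2, pow_le_pow_left₀ (by nlinarith) hxν 2]
    exact (pow_le_pow_iff_left₀ (norm_nonneg _) (by positivity) two_ne_zero).mp hsq
  have hdecomp : ⟪x, u⟫ = ⟪x - a • ν, u⟫ + a * ⟪u, ν⟫ := by
    rw [inner_sub_left, real_inner_smul_left, real_inner_comm u ν]
    ring
  have hcs : -‖x - a • ν‖ ≤ ⟪x - a • ν, u⟫ := by
    have := abs_real_inner_le_norm (x - a • ν) u
    rw [hu, mul_one] at this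
    exact (abs_le.mp this).1
  have hnormal : (1 - η) * α ≤ a * ⟪u, ν⟫ := mul_le_mul hxν huν hα.le (by nlinarith)
  nlinarith

lemma norm_sub_smul_lt_of_near_sphere (hν : ‖ν‖ = 1) (hu : ‖u‖ = 1) (hα : 0 < α)
    (hη : η ≤ α ^ 2 / 64) (hxn : ‖x‖ ≤ 1 + η) (hxν : 1 - η ≤ ⟪x, ν⟫) (huν : α ≤ ⟪u, ν⟫) :
    ‖x - (α / 2) • u‖ < 1 - η := by
  have hxu := half_le_inner_of_near_sphere hν hu hα hη hxn hxν huν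
  have hsq : ‖x - (α / 2) • u‖ ^ 2 < (1 - η) ^ 2 := by
    rw [norm_sub_sq_real, real_inner_smul_right, norm_smul, hu,
      Real.norm_of_nonneg (by positivity)]
    nlinarith [pow_le_pow_left₀ (norm_nonneg x) hxn 2]
  have hη1 : 0 ≤ 1 - η := by nlinarith [le_one_of_le_inner hν hu huν]
  exact (pow_lt_pow_iff_left₀ (norm_nonneg _) hη1 two_ne_zero).mp hsq

lemma Convex.sub_smul_mem_interior_of_near_sphere {E : Set V} (hE : Convex ℝ E)
    (hν : ‖ν‖ = 1) (hu : ‖u‖ = 1) (hα : 0 < α) (hη : η ≤ α ^ 2 / 64)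
    (hball : ball 0 (1 - η) ⊆ interior E) (hx : x ∈ closure E) (hxn : ‖x‖ ≤ 1 + η)
    (hxν : 1 - η ≤ ⟪x, ν⟫) (huν : α ≤ ⟪u, ν⟫) {d : ℝ} (hd0 : 0 < d) (hd : d < α / 2) :
    x - d • u ∈ interior E := by
  have hb : x - (α / 2) • u ∈ interior E :=
    hball (mem_ball_zero_iff.mpr (norm_sub_smul_lt_of_near_sphere hν hu hα hη hxn hxν huν))
  refine hE.openSegment_interior_closure_subset_interior hb hx
    ⟨d / (α / 2), 1 - d / (α / 2), by positivity,
      by rwa [sub_pos, div_lt_one (by positivity)], by ring, ?_⟩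
  rw [smul_sub, smul_smul, div_mul_cancel₀ d (by positivity)]
  module

lemma Convex.mem_interior_of_near_sphere {E : Set V} (hE : Convex ℝ E)
    (hν : ‖ν‖ = 1) (hα : 0 < α) (hη : η ≤ α ^ 2 / 64)
    (hball : ball 0 (1 - η) ⊆ interior E) (hx : x ∈ closure E) (hxn : ‖x‖ ≤ 1 + η)
    (hxν : 1 - η ≤ ⟪x, ν⟫) {y : V} (hy : y ∈ ball x (α / 2))
    (hcone : α ≤ ‖x - y‖⁻¹ * ⟪x - y, ν⟫) : y ∈ interior E := by
  have hd0 : 0 < ‖x - y‖ := by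
    refine norm_pos_iff.mpr fun hxy => ?_
    rw [hxy, inner_zero_left, mul_zero] at hcone
    linarith
  have hu : ‖‖x - y‖⁻¹ • (x - y)‖ = 1 := by
    rw [norm_smul, norm_inv, norm_norm, inv_mul_cancel₀ hd0.ne']
  have hyu : y = x - ‖x - y‖ • ‖x - y‖⁻¹ • (x - y) := by
    rw [smul_smul, mul_inv_cancel₀ hd0.ne', one_smul, sub_sub_cancel]
  rw [hyu]
  refine hE.sub_smul_mem_interior_of_near_sphere hν hu hα hη hball hx hxn hxν ?_ hd0 ?_
  · rwa [real_inner_smul_left]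
  · rwa [mem_ball, dist_comm, dist_eq_norm] at hy

end InnerProductSpace

section EuclideanSpace

variable {n : ℕ} {E : Set (EuclideanSpace ℝ (Fin n))} {x ν : EuclideanSpace ℝ (Fin n)}

lemma hasOutNormalAt_outNormal_or_eq_zero (E : Set (EuclideanSpace ℝ (Fin n)))
    (x : EuclideanSpace ℝ (Fin n)) : HasOutNormalAt E x (outNormal E x) ∨ outNormal E x = 0 := by
  unfold outNormal
  split_ifs with h
  · exact Or.inl h.choose_spec
  · exact Or.inr rfl

lemma HasOutNormalAt.volume_eq_zero (h : HasOutNormalAt E x ν)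
    {S : Set (EuclideanSpace ℝ (Fin n))} {R : ℝ} (hR : 0 < R) (hSR : S ⊆ ball 0 R)
    (hSν : ∀ y ∈ S, 0 < ⟪y, ν⟫)
    (hSE : ∀ᶠ r in 𝓝[>] (0 : ℝ), ∀ y ∈ S, x + r • y ∈ E) : volume S = 0 := by
  refine nonpos_iff_eq_zero.mp (ge_of_tendsto (h.2 R hR) (hSE.mono fun r hr => measure_mono ?_))
  exact fun y hy => Or.inl ⟨⟨hSR hy, hr y hy⟩, fun hy' => (hSν y hy).not_ge hy'.2⟩

lemma HasOutNormalAt.inner_sub_nonpos (h : HasOutNormalAt E x ν) (hE : Convex ℝ E)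
    (hne : (interior E).Nonempty) (hx : x ∈ closure E) {z : EuclideanSpace ℝ (Fin n)}
    (hz : z ∈ closure E) : ⟪z - x, ν⟫ ≤ 0 := by
  by_contra! hzν
  have hopen : IsOpen {w : EuclideanSpace ℝ (Fin n) | 0 < ⟪w - x, ν⟫} :=
    isOpen_lt continuous_const (by fun_prop)
  obtain ⟨w, hwE, hwν⟩ : (interior E ∩ {w | 0 < ⟪w - x, ν⟫}).Nonempty := by
    rw [← closure_inter_open_nonempty_iff hopen,
      hE.closure_interior_eq_closure_of_nonempty_interior hne]
    exact ⟨z, hz, hzν⟩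
  set S := ball 0 (‖w - x‖ + 1) ∩ (x + ·) ⁻¹' interior E ∩ {y | 0 < ⟪y, ν⟫}
  have hS : IsOpen S := (isOpen_ball.inter (isOpen_interior.preimage (by fun_prop))).inter
    (isOpen_lt continuous_const (by fun_prop))
  have hwS : w - x ∈ S := ⟨⟨by simp, by simpa using hwE⟩, hwν⟩
  refine (hS.measure_pos volume ⟨w - x, hwS⟩).ne' (h.volume_eq_zero (by positivity)
    (inter_subset_left.trans inter_subset_left) (fun y hy => hy.2) ?_)
  filter_upwards [Ioo_mem_nhdsGT one_pos] with r hr y hy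
  have hcombo : x + r • y = r • (x + y) + (1 - r) • x := by module
  rw [hcombo]
  exact interior_subset
    (hE.combo_interior_closure_mem_interior hy.1.2 hx hr.1 (by linarith [hr.2]) (by ring))

lemma Convex.mem_of_mem_cone_of_near_ball (hE : Convex ℝ E) {α η : ℝ} (hα : 0 < α)
    (hη : η ≤ α ^ 2 / 64) (hη1 : η < 1) (hin : ball 0 (1 - η) ⊆ E) (hout : E ⊆ ball 0 (1 + η))
    (hx : x ∈ closure E) (hν : HasOutNormalAt E x ν) {y : EuclideanSpace ℝ (Fin n)}
    (hy : y ∈ ball x (α / 2)) (hcone : α ≤ ‖x - y‖⁻¹ * ⟪x - y, ν⟫) : y ∈ E := by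
  have hball : ball 0 (1 - η) ⊆ interior E := isOpen_ball.subset_interior_iff.mpr hin
  have hxn : ‖x‖ ≤ 1 + η := mem_closedBall_zero_iff.mp
    (closure_minimal (hout.trans ball_subset_closedBall) isClosed_closedBall hx)
  have hxν : 1 - η ≤ ⟪x, ν⟫ := by
    have hνE : (1 - η) • ν ∈ closure E := by
      refine closure_mono hin ?_
      rw [closure_ball _ (by linarith), mem_closedBall_zero_iff, norm_smul, hν.1, mul_one,
        Real.norm_of_nonneg (by linarith)]
    have := hν.inner_sub_nonpos hE ⟨0, hball (mem_ball_self (by linarith))⟩ hx hνE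
    rw [inner_sub_left, real_inner_smul_left, real_inner_self_eq_norm_sq, hν.1] at this
    linarith
  exact interior_subset (hE.mem_interior_of_near_sphere hν.1 hα hη hball hx hxn hxν hy hcone)

end EuclideanSpace

theorem cone_property_of_convex_minimizers_general
    (δ : ℝ → ℝ)
    (hδ2 : Tendsto δ (𝓝[>] (0 : ℝ)) (𝓝 0))
    (α : ℝ) (hα : α ∈ Set.Ioo (0 : ℝ) 1) :
    ∃ r ε₂ : ℝ, 0 < r ∧ 0 < ε₂ ∧
      ∀ ε : ℝ, 0 < ε → ε < ε₂ →
        ∀ E : Set (EuclideanSpace ℝ (Fin 2)), Convex ℝ E →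
          ball (0 : EuclideanSpace ℝ (Fin 2)) (1 - δ ε) ⊆ E →
          E ⊆ ball (0 : EuclideanSpace ℝ (Fin 2)) (1 + δ ε) →
          ∀ᵐ x ∂(μH[(1 : ℝ)].restrict (frontier E)),
            ∀ y ∈ ball x r,
              α ≤ ‖x - y‖⁻¹ * (inner ℝ (x - y) (outNormal E x) : ℝ) → y ∈ E := by
  obtain ⟨hα0, hα1⟩ := hα
  obtain ⟨ε₂, hε₂, hδ⟩ := mem_nhdsGT_iff_exists_Ioo_subset.mp
    (hδ2.eventually_lt_const (by positivity : 0 < α ^ 2 / 64))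
  refine ⟨α / 2, ε₂, by positivity, hε₂, fun ε hε hεε₂ E hE hin hout => ?_⟩
  have hδε : δ ε < α ^ 2 / 64 := hδ ⟨hε, hεε₂⟩
  refine (ae_restrict_mem isClosed_frontier.measurableSet).mono fun x hx y hy hcone => ?_
  rcases hasOutNormalAt_outNormal_or_eq_zero E x with hν | hν
  · exact hE.mem_of_mem_cone_of_near_ball hα0 hδε.le (by nlinarith) hin hout
      (frontier_subset_closure hx) hν hy hcone
  · rw [hν, inner_zero_right, mul_zero] at hcone
    linarith

/-- In dimension `2`, for any `α ∈ (0,1)` there are `r > 0` and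
`ε̄₂ > 0` such that any convex set squeezed between `B_{1-δ(ε)}` and `B_{1+δ(ε)}`
(`0 < ε < ε̄₂`) contains, around `H¹`-a.e. boundary point `x`, the truncated cone
`{y ∈ B_r(x) : (x-y)/|x-y| · ν_E(x) ≥ α}`. -/
theorem cone_property_of_convex_minimizers
    (G : EuclideanSpace ℝ (Fin 2) → ℝ) (g : ℝ → ℝ)
    (hH1 : HypH1 G g) (hH2 : HypH2 G)
    (γ : ℝ) (hγ : γ ∈ Set.Ioo (0 : ℝ) 1)
    (δ : ℝ → ℝ)
    (hδ1 : ∀ ε : ℝ, 0 < ε → δ ε ∈ Set.Ioo (0 : ℝ) (1 / 4))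
    (hδ2 : Tendsto δ (𝓝[>] (0 : ℝ)) (𝓝 0))
    (α : ℝ) (hα : α ∈ Set.Ioo (0 : ℝ) 1) :
    ∃ r ε₂ : ℝ, 0 < r ∧ 0 < ε₂ ∧
      ∀ ε : ℝ, 0 < ε → ε < ε₂ →
        ∀ E : Set (EuclideanSpace ℝ (Fin 2)), Convex ℝ E →
          ball (0 : EuclideanSpace ℝ (Fin 2)) (1 - δ ε) ⊆ E →
          E ⊆ ball (0 : EuclideanSpace ℝ (Fin 2)) (1 + δ ε) →
          ∀ᵐ x ∂(μH[(1 : ℝ)].restrict (frontier E)),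
            ∀ y ∈ ball x r,
              α ≤ ‖x - y‖⁻¹ * (inner ℝ (x - y) (outNormal E x) : ℝ) → y ∈ E :=
  cone_property_of_convex_minimizers_general δ hδ2 α hα
end
end
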